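/- Let G be a bipartite graph with two vertices x, y in the same partite set satisfying N(x) ⊊ N(y). Then for n > 1, χ_ld(G[\overline{K_n}]) ≥ 3, provided G[\overline{K_n}] admits a local distance antimagic labeling. -/

import Mathlib

open Finset

open Classical in
/-- The weight of a vertex: sum of labels of its neighbors. -/
noncomputable def ldWeight {V : Type*} (G : SimpleGraph V) [Fintype V] (f : V → ℕ) (v : V) : ℕ :=
  ∑ x ∈ Finset.univ, if G.Adj v x then f x else 0

/-- `f` is a local distance antimagic labeling of `G`: a bijection onto `{1,…,|V|}`
with adjacent vertices getting distinct weights. -/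
def IsLDAL {V : Type*} (G : SimpleGraph V) [Fintype V] (f : V → ℕ) : Prop :=
  Set.BijOn f Set.univ (Set.Icc 1 (Fintype.card V)) ∧
    ∀ ⦃u v : V⦄, G.Adj u v → ldWeight G f u ≠ ldWeight G f v

/-- The local distance antimagic chromatic number: minimum number of distinct weights. -/
noncomputable def chiLD {V : Type*} (G : SimpleGraph V) [Fintype V] : ℕ :=
  sInf {k | ∃ f : V → ℕ, IsLDAL G f ∧ (Finset.univ.image (ldWeight G f)).card = k}

/-- The join `G + H` of two graphs. -/
def graphJoin {α β : Type*} (G : SimpleGraph α) (H : SimpleGraph β) :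
    SimpleGraph (α ⊕ β) where
  Adj x y :=
    match x, y with
    | Sum.inl a, Sum.inl b => G.Adj a b
    | Sum.inr a, Sum.inr b => H.Adj a b
    | Sum.inl _, Sum.inr _ => True
    | Sum.inr _, Sum.inl _ => True
  symm := by
    refine ⟨?_⟩
    rintro (a | a) (b | b) h
    exacts [h.symm, trivial, trivial, h.symm]
  loopless := by
    refine ⟨?_⟩
    rintro (a | a) h
    exacts [G.irrefl h, H.irrefl h]

/-- The lexicographic product `G[H]`. -/
def lexProd {α β : Type*} (G : SimpleGraph α) (H : SimpleGraph β) :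
    SimpleGraph (α × β) where
  Adj x y := G.Adj x.1 y.1 ∨ (x.1 = y.1 ∧ H.Adj x.2 y.2)
  symm := by
    refine ⟨?_⟩
    rintro x y (h | ⟨e, h⟩)
    exacts [Or.inl h.symm, Or.inr ⟨e.symm, h.symm⟩]
  loopless := by
    refine ⟨?_⟩
    rintro x (h | ⟨e, h⟩)
    exacts [G.irrefl h, H.irrefl h]

/-- The friendship graph `F_n`: `n` triangles sharing the central vertex `none`. -/
def friendship (n : ℕ) : SimpleGraph (Option (Fin n × Fin 2)) where
  Adj x y := x ≠ y ∧ (x = none ∨ y = none ∨ ∃ i a b, x = some (i, a) ∧ y = some (i, b))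
  symm := by
    refine ⟨?_⟩
    rintro x y ⟨hne, h⟩
    refine ⟨hne.symm, ?_⟩
    rcases h with h | h | ⟨i, a, b, hx, hy⟩
    · exact Or.inr (Or.inl h)
    · exact Or.inl h
    · exact Or.inr (Or.inr ⟨i, b, a, hy, hx⟩)
  loopless := ⟨fun x h => h.1 rfl⟩

/-- The bistar `B_{n,n}`: two adjacent centers, each with `n` leaves. -/
def bistar (n : ℕ) : SimpleGraph (Bool ⊕ Bool × Fin n) where
  Adj x y :=
    match x, y with
    | Sum.inl a, Sum.inl b => a ≠ b
    | Sum.inl a, Sum.inr (c, _) => a = c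
    | Sum.inr (c, _), Sum.inl a => a = c
    | Sum.inr _, Sum.inr _ => False
  symm := by
    refine ⟨?_⟩
    rintro (a | ⟨c, i⟩) (b | ⟨d, j⟩) h
    exacts [h.symm, h, h, h.elim]
  loopless := by
    refine ⟨?_⟩
    rintro (a | ⟨c, i⟩) h
    exacts [h rfl, h]

/-! Vertices `x` with `N(x) ⊊ N(y)` force three distinct weights under any labeling by positive
integers in which adjacent vertices get distinct weights: `w(x) < w(y)`, and `y` has a neighbour `z`
outside `N(x)`. If `x` has a neighbour `u`, then `u ∈ N(y)` too and `w(x), w(y), w(u)` are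
distinct; otherwise `w(x) = 0 < w(z) ≠ w(y)`. In `G[K̄ₙ]` every copy of a vertex has the neighbourhood
`N(v) × Fin n`, so the strict inclusion in `G` lifts to the product. -/

section ldWeight

variable {V : Type*} [Fintype V] (G : SimpleGraph V) (f : V → ℕ)

theorem ldWeight_eq_zero_of_forall_not_adj {x : V} (hx : ∀ u, ¬ G.Adj x u) :
    ldWeight G f x = 0 :=
  Finset.sum_eq_zero fun u _ => if_neg (hx u)

variable {G f}

theorem ldWeight_pos_of_adj (hf : ∀ v, 0 < f v) {x z : V} (hxz : G.Adj x z) :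
    0 < ldWeight G f x :=
  Finset.sum_pos' (fun _ _ => by positivity) ⟨z, Finset.mem_univ _, by rw [if_pos hxz]; exact hf z⟩

theorem ldWeight_lt_of_neighborSet_ssubset (hf : ∀ v, 0 < f v) {x y : V}
    (hxy : G.neighborSet x ⊂ G.neighborSet y) : ldWeight G f x < ldWeight G f y := by
  obtain ⟨z, hyz, hxz⟩ : ∃ z, G.Adj y z ∧ ¬ G.Adj x z := Set.exists_of_ssubset hxy
  refine Finset.sum_lt_sum (fun u _ => ?_) ⟨z, Finset.mem_univ _, ?_⟩
  · by_cases hxu : G.Adj x u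
    · rw [if_pos hxu, if_pos (show G.Adj y u from hxy.subset hxu)]
    · rw [if_neg hxu]
      exact Nat.zero_le _
  · rw [if_neg hxz, if_pos hyz]
    exact hf z

theorem three_le_card_image_ldWeight (hf : ∀ v, 0 < f v)
    (hadj : ∀ ⦃u v : V⦄, G.Adj u v → ldWeight G f u ≠ ldWeight G f v) {x y : V}
    (hxy : G.neighborSet x ⊂ G.neighborSet y) : 3 ≤ (univ.image (ldWeight G f)).card := by
  obtain ⟨z, hyz, -⟩ : ∃ z, G.Adj y z ∧ ¬ G.Adj x z := Set.exists_of_ssubset hxy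
  have hwxy := (ldWeight_lt_of_neighborSet_ssubset hf hxy).ne
  have hmem : ∀ v, ldWeight G f v ∈ univ.image (ldWeight G f) :=
    fun v => Finset.mem_image_of_mem _ (Finset.mem_univ v)
  refine Finset.two_lt_card_iff.2 ?_
  by_cases hx : ∃ u, G.Adj x u
  · obtain ⟨u, hxu⟩ := hx
    exact ⟨_, _, _, hmem x, hmem y, hmem u, hwxy, hadj hxu, hadj (hxy.subset hxu)⟩
  · rw [not_exists] at hx
    refine ⟨_, _, _, hmem x, hmem y, hmem z, hwxy, ?_, hadj hyz⟩
    rw [ldWeight_eq_zero_of_forall_not_adj G f hx]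
    exact (ldWeight_pos_of_adj hf hyz.symm).ne

end ldWeight

theorem IsLDAL.pos {V : Type*} [Fintype V] {G : SimpleGraph V} {f : V → ℕ} (hf : IsLDAL G f)
    (v : V) : 0 < f v :=
  (hf.1.mapsTo (Set.mem_univ v)).1

theorem le_chiLD {V : Type*} [Fintype V] {G : SimpleGraph V} {k : ℕ} (hex : ∃ f, IsLDAL G f)
    (hk : ∀ f, IsLDAL G f → k ≤ (univ.image (ldWeight G f)).card) : k ≤ chiLD G := by
  obtain ⟨f, hf⟩ := hex
  refine le_csInf ⟨_, f, hf, rfl⟩ ?_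
  rintro _ ⟨g, hg, rfl⟩
  exact hk g hg

theorem lexProd_bot_adj {α β : Type*} {G : SimpleGraph α} {p q : α × β} :
    (lexProd G ⊥).Adj p q ↔ G.Adj p.1 q.1 := by
  simp [lexProd]

theorem lexProd_bot_neighborSet_ssubset {α β : Type*} {G : SimpleGraph α} {x y : α}
    (hxy : G.neighborSet x ⊂ G.neighborSet y) (i j : β) :
    (lexProd G ⊥).neighborSet (x, i) ⊂ (lexProd G ⊥).neighborSet (y, j) := by
  obtain ⟨z, hyz, hxz⟩ : ∃ z, G.Adj y z ∧ ¬ G.Adj x z := Set.exists_of_ssubset hxy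
  refine Set.ssubset_iff_subset_ne.2 ⟨fun p hp => ?_, fun h => ?_⟩
  · exact lexProd_bot_adj.2 (hxy.subset (lexProd_bot_adj.1 hp))
  · have hz : (z, i) ∈ (lexProd G ⊥).neighborSet (y, j) := lexProd_bot_adj.2 hyz
    rw [← h] at hz
    exact hxz (lexProd_bot_adj.1 hz)

theorem stmt_16_general {V : Type*} [Fintype V] (G : SimpleGraph V) (n : ℕ) (hn : 1 < n)
    (x y : V)
    (hsub : G.neighborSet x ⊂ G.neighborSet y)
    (hex : ∃ f, IsLDAL (lexProd G (⊥ : SimpleGraph (Fin n))) f) :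
    3 ≤ chiLD (lexProd G (⊥ : SimpleGraph (Fin n))) := by
  have i : Fin n := ⟨0, by omega⟩
  exact le_chiLD hex fun f hf =>
    three_le_card_image_ldWeight hf.pos hf.2 (lexProd_bot_neighborSet_ssubset hsub i i)

theorem stmt_16 {V : Type*} [Fintype V] (G : SimpleGraph V) (n : ℕ) (hn : 1 < n)
    (s : Set V) (hbip : ∀ ⦃u v⦄, G.Adj u v → (u ∈ s ↔ v ∉ s))
    (x y : V) (hxy : x ∈ s ↔ y ∈ s)
    (hsub : G.neighborSet x ⊂ G.neighborSet y)
    (hex : ∃ f, IsLDAL (lexProd G (⊥ : SimpleGraph (Fin n))) f) :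
    3 ≤ chiLD (lexProd G (⊥ : SimpleGraph (Fin n))) :=
  stmt_16_general G n hn x y hsub hex
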